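/- Let ρ₀, δ, c₂ ≥ c₁ > 0 and let A : ℝ → ℝ be differentiable with A(0) = 0 and c₁ ≤ A′(t) ≤ c₂ < 1 for all t. Let V ⊂ ℝ be a set such that every interval J of length |J| ≥ 1 contains at most ρ₀|J| points of V. Then there exists C > 0 such that for all b ≥ 0 and 0 ≤ L ≤ 1: ∫_b^{b+L} [ Σ_{v ∈ A(V), |v − α| ≤ δ} (1 + α²(v − α)²)^{-1} + (1 + α²)^{-1} ] dα ≤ C/(1 + b). -/

import Mathlib

open MeasureTheory Set Real

/-!
Only the points of `A '' V` within `δ` of `[b, b + 1]` contribute. Since `A` expands distances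
by a factor at least `c₁`, the set `A '' V` again has bounded density, so there are `O(1)` such
points. Each one contributes at most `π / b`, the mass of a Lorentzian of width `1 / b`, and at
most `L ≤ 1`, hence `O(1 / (1 + b))`; the term `(1 + α²)⁻¹` is `O(1 / (1 + b))` pointwise.
-/

def HasDensityAtMost (ρ : ℝ) (V : Set ℝ) : Prop :=
  ∀ x y : ℝ, 1 ≤ y - x →
    (V ∩ Icc x y).Finite ∧ ((V ∩ Icc x y).ncard : ℝ) ≤ ρ * (y - x)

theorem HasDensityAtMost.nonneg {ρ : ℝ} {V : Set ℝ} (hV : HasDensityAtMost ρ V) :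
    0 ≤ ρ := by
  simpa using (Nat.cast_nonneg _).trans (hV 0 1 (by norm_num)).2

theorem sub_le_of_mul_sub_le_image_sub {c x y : ℝ} {A : ℝ → ℝ} (hc : 0 < c)
    (hA : ∀ ⦃x y⦄, x ≤ y → c * (y - x) ≤ A y - A x) {u u' : ℝ}
    (hu : A u ∈ Icc x y) (hu' : A u' ∈ Icc x y) :
    u' - u ≤ c⁻¹ * (y - x) := by
  rcases le_total u u' with h | h
  · rw [le_inv_mul_iff₀ hc]
    linarith [hA h, hu.1, hu'.2]
  · have : 0 ≤ c⁻¹ * (y - x) := by have := hu.1.trans hu.2; positivity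
    linarith

/-- The preimages of points of `[x, y]` lie within `c⁻¹ * (y - x)` of each other; the `max`
keeps the enclosing interval long enough for the density bound on `V`. -/
theorem HasDensityAtMost.image {ρ c : ℝ} {V : Set ℝ} {A : ℝ → ℝ}
    (hV : HasDensityAtMost ρ V) (hc : 0 < c) (hA : ∀ ⦃x y⦄, x ≤ y → c * (y - x) ≤ A y - A x) :
    HasDensityAtMost (2 * max 1 c⁻¹ * ρ) (A '' V) := by
  intro x y hxy
  set r := max 1 c⁻¹ * (y - x)
  have hr : 1 ≤ r := one_le_mul_of_one_le_of_one_le (le_max_left _ _) hxy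
  rcases (A '' V ∩ Icc x y).eq_empty_or_nonempty with hempty | ⟨_, ⟨u₀, -, rfl⟩, hu₀⟩
  · rw [hempty, ncard_empty, Nat.cast_zero]
    exact ⟨finite_empty, by have := hV.nonneg; positivity⟩
  have hcr : c⁻¹ * (y - x) ≤ r := mul_le_mul_of_nonneg_right (le_max_right _ _) (by linarith)
  have hsub : A '' V ∩ Icc x y ⊆ A '' (V ∩ Icc (u₀ - r) (u₀ + r)) := by
    rintro _ ⟨⟨u, huV, rfl⟩, hu⟩
    refine ⟨u, ⟨huV, ?_, ?_⟩, rfl⟩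
    · linarith [sub_le_of_mul_sub_le_image_sub hc hA hu hu₀]
    · linarith [sub_le_of_mul_sub_le_image_sub hc hA hu₀ hu]
  obtain ⟨hfin, hcard⟩ := hV (u₀ - r) (u₀ + r) (by linarith)
  refine ⟨(hfin.image A).subset hsub, ?_⟩
  calc ((A '' V ∩ Icc x y).ncard : ℝ) ≤ (V ∩ Icc (u₀ - r) (u₀ + r)).ncard := by
        exact_mod_cast (ncard_le_ncard hsub (hfin.image A)).trans (ncard_image_le hfin)
    _ ≤ ρ * (u₀ + r - (u₀ - r)) := hcard
    _ = 2 * max 1 c⁻¹ * ρ * (y - x) := by ring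

theorem tsum_subtype_le_sum_of_subset {β M : Type*} [AddCommMonoid M] [PartialOrder M]
    [IsOrderedAddMonoid M] [TopologicalSpace M] [OrderClosedTopology M] {p : β → Prop}
    {t : Finset β} {f : β → M} (hpt : ∀ v, p v → v ∈ t) (hf : ∀ v ∈ t, 0 ≤ f v) :
    ∑' v : {v // p v}, f v ≤ ∑ v ∈ t, f v := by
  have : Finite {v // p v} := t.finite_toSet.subset hpt
  rw [← Finset.tsum_subtype']
  exact Summable.tsum_le_tsum_of_inj (fun v => ⟨v, hpt v v.2⟩)
    (fun _ _ h => Subtype.ext (Subtype.mk.inj h)) (fun v _ => hf v v.2) (fun _ => le_rfl)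
    .of_finite .of_finite

theorem setIntegral_tsum_add_le {X β : Type*} [MeasurableSpace X] {μ : Measure X} {s : Set X}
    {p : X → β → Prop} {T : Finset β} {f : X → β → ℝ} {g : X → ℝ} (hs : MeasurableSet s)
    (hpT : ∀ α ∈ s, ∀ v, p α v → v ∈ T) (hf0 : ∀ α v, 0 ≤ f α v) (hg0 : ∀ α, 0 ≤ g α)
    (hf : ∀ v, IntegrableOn (fun α => f α v) s μ) (hg : IntegrableOn g s μ) :
    ∫ α in s, (∑' v : {v // p α v}, f α v) + g α ∂μ
      ≤ ∑ v ∈ T, (∫ α in s, f α v ∂μ) + ∫ α in s, g α ∂μ := by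
  have hsum : IntegrableOn (fun α => ∑ v ∈ T, f α v) s μ :=
    integrable_finsetSum T fun v _ => hf v
  calc ∫ α in s, (∑' v : {v // p α v}, f α v) + g α ∂μ
      ≤ ∫ α in s, (∑ v ∈ T, f α v) + g α ∂μ := by
        refine integral_mono_of_nonneg (.of_forall fun α => ?_) (hsum.add hg) ?_
        · exact add_nonneg (tsum_nonneg fun v => hf0 α v) (hg0 α)
        · filter_upwards [self_mem_ae_restrict hs] with α hα
          gcongr
          exact tsum_subtype_le_sum_of_subset (hpT α hα) fun v _ => hf0 α v
    _ = ∑ v ∈ T, (∫ α in s, f α v ∂μ) + ∫ α in s, g α ∂μ := by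
        rw [integral_add hsum hg, integral_finsetSum T fun v _ => hf v]

theorem intervalIntegral_inv_one_add_sq_mul_sub_le {a : ℝ} (ha : 0 < a) (b c d : ℝ) :
    ∫ x in b..c, (1 + (a * x - d) ^ 2)⁻¹ ≤ π / a := by
  rw [intervalIntegral.integral_comp_mul_sub (fun x => (1 + x ^ 2)⁻¹) ha.ne',
    integral_inv_one_add_sq, smul_eq_mul, inv_mul_eq_div]
  gcongr
  linarith [arctan_lt_pi_div_two (a * c - d), neg_pi_div_two_lt_arctan (a * b - d)]

theorem setIntegral_Icc_le_of_le {f : ℝ → ℝ} {b L K : ℝ} (hL : L ≤ 1) (hK : 0 ≤ K)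
    (hf0 : ∀ α ∈ Icc b (b + L), 0 ≤ f α) (hf : ∀ α ∈ Icc b (b + L), f α ≤ K) :
    ∫ α in Icc b (b + L), f α ≤ K := by
  have hnorm := norm_setIntegral_le_of_norm_le_const (μ := volume) measure_Icc_lt_top
    fun α hα => (Real.norm_of_nonneg (hf0 α hα)).trans_le (hf α hα)
  rw [Real.volume_real_Icc, add_sub_cancel_left] at hnorm
  calc ∫ α in Icc b (b + L), f α ≤ ‖∫ α in Icc b (b + L), f α‖ := le_norm_self _
    _ ≤ K * max L 0 := hnorm
    _ ≤ K := mul_le_of_le_one_right hK (max_le hL zero_le_one)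

theorem continuous_inv_one_add_sq_mul_sq_sub (v : ℝ) :
    Continuous fun α : ℝ => (1 + α ^ 2 * (v - α) ^ 2)⁻¹ := by
  fun_prop (disch := intro; positivity)

theorem setIntegral_Icc_inv_one_add_sq_mul_sq_sub_le {b L : ℝ} (v : ℝ) (hb : 0 ≤ b)
    (hL0 : 0 ≤ L) (hL1 : L ≤ 1) :
    ∫ α in Icc b (b + L), (1 + α ^ 2 * (v - α) ^ 2)⁻¹ ≤ (1 + π) / (1 + b) := by
  rcases le_total b π with hbπ | hπb
  · refine setIntegral_Icc_le_of_le hL1 (by positivity) (fun α _ => by positivity)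
      fun α _ => ?_
    calc (1 + α ^ 2 * (v - α) ^ 2)⁻¹ ≤ 1 :=
          inv_le_one_of_one_le₀ (by nlinarith [sq_nonneg (α * (v - α))])
      _ ≤ (1 + π) / (1 + b) := by rw [one_le_div (by positivity)]; linarith
  have hb0 : 0 < b := pi_pos.trans_le hπb
  calc ∫ α in Icc b (b + L), (1 + α ^ 2 * (v - α) ^ 2)⁻¹
      ≤ ∫ α in Icc b (b + L), (1 + (b * α - b * v) ^ 2)⁻¹ := by
        refine setIntegral_mono_on (continuous_inv_one_add_sq_mul_sq_sub v).integrableOn_Icc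
          (Continuous.integrableOn_Icc (by fun_prop (disch := intro; positivity)))
          measurableSet_Icc fun α hα => inv_anti₀ (by positivity) ?_
        have : b ^ 2 ≤ α ^ 2 := pow_le_pow_left₀ hb hα.1 2
        nlinarith [sq_nonneg (v - α)]
    _ = ∫ α in b..b + L, (1 + (b * α - b * v) ^ 2)⁻¹ := by
        rw [integral_Icc_eq_integral_Ioc, intervalIntegral.integral_of_le (by linarith)]
    _ ≤ π / b := intervalIntegral_inv_one_add_sq_mul_sub_le hb0 _ _ _
    _ ≤ (1 + π) / (1 + b) := by rw [div_le_div_iff₀ hb0 (by positivity)]; nlinarith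

theorem setIntegral_Icc_inv_one_add_sq_le {b L : ℝ} (hb : 0 ≤ b) (hL1 : L ≤ 1) :
    ∫ α in Icc b (b + L), (1 + α ^ 2)⁻¹ ≤ 2 / (1 + b) := by
  refine setIntegral_Icc_le_of_le hL1 (by positivity) (fun α _ => by positivity)
    fun α hα => ?_
  rw [inv_le_comm₀ (by positivity) (by positivity), inv_div, div_le_iff₀ two_pos]
  nlinarith [hα.1, sq_nonneg (α - 1/2)]

theorem stmt19_general (ρ₀ δ c₁ c₂ : ℝ) (hδ : 0 < δ)
    (hc₁ : 0 < c₁)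
    (A : ℝ → ℝ) (hA : Differentiable ℝ A)
    (hA' : ∀ t : ℝ, c₁ ≤ deriv A t ∧ deriv A t ≤ c₂)
    (V : Set ℝ)
    (hV : ∀ x y : ℝ, 1 ≤ y - x →
      (V ∩ Icc x y).Finite ∧ ((V ∩ Icc x y).ncard : ℝ) ≤ ρ₀ * (y - x)) :
    ∃ C > 0, ∀ b L : ℝ, 0 ≤ b → 0 ≤ L → L ≤ 1 →
      (∫ α in Icc b (b + L),
          ((∑' v : {v : ℝ // v ∈ A '' V ∧ |v - α| ≤ δ},
              (1 + α ^ 2 * ((v : ℝ) - α) ^ 2)⁻¹) +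
            (1 + α ^ 2)⁻¹)) ≤ C / (1 + b) := by
  have hAV : HasDensityAtMost (2 * max 1 c₁⁻¹ * ρ₀) (A '' V) :=
    HasDensityAtMost.image hV hc₁ (mul_sub_le_image_sub_of_le_deriv hA fun t => (hA' t).1)
  set ρ := 2 * max 1 c₁⁻¹ * ρ₀
  have hρ : 0 ≤ ρ := hAV.nonneg
  refine ⟨ρ * (1 + 2 * δ) * (1 + π) + 2, by positivity, fun b L hb hL0 hL1 => ?_⟩
  obtain ⟨hfin, hcard⟩ := hAV (b - δ) (b + 1 + δ) (by linarith)
  rw [ncard_eq_toFinset_card _ hfin] at hcard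
  have hnear : ∀ α ∈ Icc b (b + L), ∀ v, v ∈ A '' V ∧ |v - α| ≤ δ → v ∈ hfin.toFinset := by
    rintro α ⟨hbα, hαb⟩ v ⟨hv, hvα⟩
    rw [abs_le] at hvα
    exact hfin.mem_toFinset.2 ⟨hv, by linarith, by linarith⟩
  calc _ ≤ ∑ v ∈ hfin.toFinset, (∫ α in Icc b (b + L), (1 + α ^ 2 * (v - α) ^ 2)⁻¹)
          + ∫ α in Icc b (b + L), (1 + α ^ 2)⁻¹ :=
        setIntegral_tsum_add_le measurableSet_Icc hnear (fun _ _ => by positivity)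
          (fun _ => by positivity)
          (fun v => (continuous_inv_one_add_sq_mul_sq_sub v).integrableOn_Icc)
          (Continuous.integrableOn_Icc (by fun_prop (disch := intro; positivity)))
    _ ≤ hfin.toFinset.card * ((1 + π) / (1 + b)) + 2 / (1 + b) := by
        grw [Finset.sum_le_card_nsmul _ _ _ fun v _ =>
            setIntegral_Icc_inv_one_add_sq_mul_sq_sub_le v hb hL0 hL1,
          setIntegral_Icc_inv_one_add_sq_le hb hL1, nsmul_eq_mul]
    _ ≤ (ρ * (1 + 2 * δ) * (1 + π) + 2) / (1 + b) := by
        rw [mul_div_assoc', ← add_div]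
        gcongr
        linarith

/-- Corollary 5.3: integrating the derivative majorant of `g` over an interval `[b, b+L]`
of length `≤ 1` yields the bound `C/(1+b)`, where the points `v = A(u)`, `u ∈ V`, are the
images under the rescaled critical-direction function `A` of the level-set points `V`,
whose density is controlled (any interval of length `≥ 1` contains at most `ρ₀·|J|`
of them). -/
theorem stmt19 (ρ₀ δ c₁ c₂ : ℝ) (hρ₀ : 0 < ρ₀) (hδ : 0 < δ)
    (hc₁ : 0 < c₁) (hc : c₁ ≤ c₂) (hc₂ : c₂ < 1)
    (A : ℝ → ℝ) (hA : Differentiable ℝ A) (hA0 : A 0 = 0)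
    (hA' : ∀ t : ℝ, c₁ ≤ deriv A t ∧ deriv A t ≤ c₂)
    (V : Set ℝ)
    (hV : ∀ x y : ℝ, 1 ≤ y - x →
      (V ∩ Icc x y).Finite ∧ ((V ∩ Icc x y).ncard : ℝ) ≤ ρ₀ * (y - x)) :
    ∃ C > 0, ∀ b L : ℝ, 0 ≤ b → 0 ≤ L → L ≤ 1 →
      (∫ α in Icc b (b + L),
          ((∑' v : {v : ℝ // v ∈ A '' V ∧ |v - α| ≤ δ},
              (1 + α ^ 2 * ((v : ℝ) - α) ^ 2)⁻¹) +
            (1 + α ^ 2)⁻¹)) ≤ C / (1 + b) :=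
  stmt19_general ρ₀ δ c₁ c₂ hδ hc₁ A hA hA' V hV
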